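/- arXiv:1604.04936 — 3 statements merged into one kernel-verified Lean document; each statement's English description precedes it below -/
import Mathlib

section
/- Let β ∈ [0,1), λ = 1−β > 0, and let n satisfy Assumption 1 with δ* = λ. Then the mean clone size E(Y_t) = e^{λt}·(∫_0^t n_τ e^{−λτ} dτ)/(∫_0^t n_τ dτ) tends to infinity as t → ∞, while (log E(Y_t))/t → 0; i.e. E(Y_t) diverges subexponentially. -/
/-!
The limits `L(u) = lim n_{t-u}/n_t` of Assumption 1 are forced to equal `e^{-λu}`: the
increments `log n_t - log n_{t-u}` converge to `-log L(u)`, and their Cesàro means along `uℕ`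
converge to `λu`. Hence the discounted integrand `g_τ = n_τ e^{-λτ}` satisfies
`g_{t-u}/g_t → 1`, and dominated convergence gives `g_t = o(∫_0^t g)`. Splitting `a_t` at
`t - s` yields `a_t ≤ e^{λt} (e^{-λs} ∫_0^t g + s g_t)`, so
`E(Y_t) = e^{λt} (∫_0^t g) / a_t` is eventually above any bound. For the rate,
`n_{t-1} ≤ a_t ≤ t n_t` gives `log a_t / t → λ`, while `∫_0^t g` is squeezed between a
positive constant and `2t e^{εt}` for every `ε > 0`, so `log (∫_0^t g) / t → 0`.
-/

open Filter Real intervalIntegral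

/-- Assumption 1 on the wild-type growth function `n`. -/
def Assumption1 (n : ℝ → ℝ) : Prop :=
  (∀ τ : ℝ, τ < 0 → n τ = 0) ∧
  ContinuousOn n (Set.Ioi 0) ∧
  Filter.Tendsto n (nhdsWithin 0 (Set.Ioi 0)) (nhds (n 0)) ∧
  (∀ τ : ℝ, 0 < τ → 0 < n τ) ∧
  MonotoneOn n (Set.Ioi 0) ∧
  (∀ x : ℝ, 0 ≤ x → ∃ L : ℝ, 0 < L ∧
    Filter.Tendsto (fun t : ℝ => n (t - x) / n t) Filter.atTop (nhds L))

open MeasureTheory Topology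

theorem eq_mul_of_tendsto_div_of_tendsto_sub {φ : ℝ → ℝ} {μ c h : ℝ} (hh : 0 < h)
    (hdiv : Tendsto (fun t => φ t / t) atTop (𝓝 μ))
    (hsub : Tendsto (fun t => φ t - φ (t - h)) atTop (𝓝 c)) : c = μ * h := by
  have hgrid : Tendsto (fun k : ℕ => (k : ℝ) * h) atTop atTop :=
    tendsto_natCast_atTop_atTop.atTop_mul_const hh
  have hstep : Tendsto (fun k : ℕ => φ ((k + 1 : ℕ) * h) - φ (k * h)) atTop (𝓝 c) := by
    refine (hsub.comp (hgrid.comp (tendsto_add_atTop_nat 1))).congr fun k => ?_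
    simp only [Function.comp_apply, Nat.cast_add, Nat.cast_one]
    ring_nf
  have hcesaro := hstep.cesaro
  simp only [Finset.sum_range_sub (fun k : ℕ => φ (k * h))] at hcesaro
  refine tendsto_nhds_unique hcesaro ?_
  have hmain : Tendsto (fun k : ℕ => φ (k * h) / (k * h) * h - (k : ℝ)⁻¹ * φ 0) atTop
      (𝓝 (μ * h - 0 * φ 0)) :=
    ((hdiv.comp hgrid).mul_const h).sub
      (tendsto_inv_atTop_zero.comp tendsto_natCast_atTop_atTop |>.mul_const _)
  rw [zero_mul, sub_zero] at hmain
  refine hmain.congr' ?_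
  filter_upwards [eventually_gt_atTop 0] with k hk
  have hk' : (k : ℝ) ≠ 0 := by positivity
  simp only [Nat.cast_zero, zero_mul]
  field_simp

namespace Assumption1

variable {n : ℝ → ℝ}

theorem monotone (hn : Assumption1 n) : Monotone n := by
  obtain ⟨hneg, -, hlim, hpos, hmono, -⟩ := hn
  have hzero_le : ∀ t, 0 < t → n 0 ≤ n t := fun t ht =>
    le_of_tendsto hlim <| mem_of_superset (Ioc_mem_nhdsGT ht) fun x hx => hmono hx.1 ht hx.2
  have hnonneg : ∀ t, 0 ≤ t → 0 ≤ n t := by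
    have : 0 ≤ n 0 := ge_of_tendsto hlim <|
      eventually_mem_nhdsWithin.mono fun x hx => (hpos x hx).le
    intro t ht
    rcases ht.eq_or_lt with rfl | ht
    exacts [this, (hpos t ht).le]
  intro s t hst
  rcases lt_or_ge s 0 with hs | hs
  · rw [hneg s hs]
    rcases lt_or_ge t 0 with ht | ht
    exacts [(hneg t ht).ge, hnonneg t ht]
  rcases hs.eq_or_lt with rfl | hs
  · rcases hst.eq_or_lt with rfl | ht
    exacts [le_rfl, hzero_le t ht]
  · exact hmono hs (hs.trans_le hst) hst

theorem nonneg (hn : Assumption1 n) (τ : ℝ) : 0 ≤ n τ :=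
  calc 0 = n (min τ 0 - 1) := (hn.1 _ (by linarith [min_le_right τ 0])).symm
    _ ≤ n τ := hn.monotone (by linarith [min_le_left τ 0])

theorem tendsto_shift_div {lam : ℝ} (hn : Assumption1 n)
    (hlog : Tendsto (fun t => log (n t) / t) atTop (𝓝 lam)) {u : ℝ} (hu : 0 < u) :
    Tendsto (fun t => n (t - u) / n t) atTop (𝓝 (exp (-(lam * u)))) := by
  obtain ⟨L, hL, hratio⟩ := hn.2.2.2.2.2 u hu.le
  have hdiff : Tendsto (fun t => log (n t) - log (n (t - u))) atTop (𝓝 (-log L)) := by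
    refine (hratio.log hL.ne').neg.congr' ?_
    filter_upwards [eventually_gt_atTop u] with t ht
    rw [log_div (hn.2.2.2.1 _ (by linarith)).ne' (hn.2.2.2.1 t (by linarith)).ne', neg_sub]
  rwa [← eq_mul_of_tendsto_div_of_tendsto_sub hu hlog hdiff, neg_neg, exp_log hL]

end Assumption1

section Integrals

variable {n : ℝ → ℝ} {lam : ℝ}

theorem intervalIntegrable_mul_exp (hmono : Monotone n) (a b : ℝ) :
    IntervalIntegrable (fun τ => n τ * exp (-lam * τ)) volume a b :=
  hmono.intervalIntegrable.mul_continuousOn (by fun_prop)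

theorem intervalIntegral_pos_of_monotone (hmono : Monotone n) (hpos : ∀ τ, 0 < τ → 0 < n τ)
    {t : ℝ} (ht : 0 < t) : 0 < ∫ τ in (0 : ℝ)..t, n τ :=
  intervalIntegral_pos_of_pos_on hmono.intervalIntegrable (fun τ hτ => hpos τ hτ.1) ht

theorem intervalIntegral_mul_exp_pos (hmono : Monotone n) (hpos : ∀ τ, 0 < τ → 0 < n τ)
    {t : ℝ} (ht : 0 < t) : 0 < ∫ τ in (0 : ℝ)..t, n τ * exp (-lam * τ) :=
  intervalIntegral_pos_of_pos_on (intervalIntegrable_mul_exp hmono 0 t)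
    (fun τ hτ => mul_pos (hpos τ hτ.1) (exp_pos _)) ht

theorem tendsto_integral_shift_div_mul_exp {T : ℝ} (hmono : Monotone n)
    (hpos : ∀ τ, 0 < τ → 0 < n τ)
    (hr : ∀ u, 0 < u → Tendsto (fun t => n (t - u) / n t) atTop (𝓝 (exp (-(lam * u)))))
    (hT : 0 ≤ T) :
    Tendsto (fun t => ∫ u in (0 : ℝ)..T, n (t - u) / n t * exp (lam * u)) atTop (𝓝 T) := by
  have hlim : (∫ u in (0 : ℝ)..T, exp (-(lam * u)) * exp (lam * u)) = T := by
    simp [← exp_add]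
  nth_rw 2 [← hlim]
  refine intervalIntegral.tendsto_integral_filter_of_dominated_convergence
    (fun u => exp (lam * u)) ?_ ?_ ((by fun_prop : Continuous _).intervalIntegrable 0 T) ?_
  · exact Eventually.of_forall fun t => (((hmono.measurable.comp (measurable_const.sub
      measurable_id)).div_const _).mul (by fun_prop)).aestronglyMeasurable
  · filter_upwards [eventually_gt_atTop T] with t ht
    refine Eventually.of_forall fun u hu => ?_
    rw [Set.uIoc_of_le hT] at hu
    have hnt := hpos t (by linarith [hu.1])
    have hratio : n (t - u) / n t ≤ 1 := (div_le_one hnt).2 (hmono (by linarith [hu.1]))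
    have hnum := hpos (t - u) (by linarith [hu.2])
    rw [norm_of_nonneg (by positivity)]
    exact mul_le_of_le_one_left (exp_pos _).le hratio
  · refine Eventually.of_forall fun u hu => ?_
    rw [Set.uIoc_of_le hT] at hu
    exact (hr u hu.1).mul_const _

theorem tendsto_integral_mul_exp_div_atTop (hmono : Monotone n) (hpos : ∀ τ, 0 < τ → 0 < n τ)
    (hr : ∀ u, 0 < u → Tendsto (fun t => n (t - u) / n t) atTop (𝓝 (exp (-(lam * u))))) :
    Tendsto (fun t => (∫ τ in (0 : ℝ)..t, n τ * exp (-lam * τ)) / (n t * exp (-lam * t)))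
      atTop atTop := by
  refine tendsto_atTop.2 fun C => ?_
  set T := max C 0 + 1
  have hT : 0 ≤ T := by positivity
  have hC : C < T := by linarith [le_max_left C 0]
  filter_upwards [(tendsto_integral_shift_div_mul_exp hmono hpos hr hT).eventually
    (eventually_gt_nhds hC), eventually_gt_atTop T] with t hlt ht
  have hgt : 0 < n t * exp (-lam * t) := mul_pos (hpos t (by linarith)) (exp_pos _)
  have hshift : (∫ u in (0 : ℝ)..T, n (t - u) / n t * exp (lam * u)) =
      (∫ τ in (t - T)..t, n τ * exp (-lam * τ)) / (n t * exp (-lam * t)) := by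
    calc (∫ u in (0 : ℝ)..T, n (t - u) / n t * exp (lam * u))
        = ∫ u in (0 : ℝ)..T, n (t - u) * exp (-lam * (t - u)) / (n t * exp (-lam * t)) := by
          refine integral_congr fun u _ => ?_
          rw [show -lam * (t - u) = -lam * t + lam * u by ring, exp_add]
          field_simp
      _ = _ := by
          rw [intervalIntegral.integral_div,
            integral_comp_sub_left (fun τ => n τ * exp (-lam * τ)) t, sub_zero]
  rw [hshift] at hlt
  refine hlt.le.trans (div_le_div_of_nonneg_right ?_ hgt.le)
  refine integral_mono_interval (by linarith) (by linarith) le_rfl ?_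
    (intervalIntegrable_mul_exp hmono _ _)
  refine ae_restrict_of_forall_mem measurableSet_Ioc fun τ hτ => ?_
  exact mul_nonneg (hpos τ hτ.1).le (exp_pos _).le

theorem integral_le_exp_mul_integral_mul_exp_add (hmono : Monotone n) (hnn : ∀ τ, 0 ≤ n τ)
    (hlam : 0 ≤ lam) {s t : ℝ} (hs : 0 ≤ s) (hst : s ≤ t) :
    ∫ τ in (0 : ℝ)..t, n τ ≤
      exp (lam * (t - s)) * (∫ τ in (0 : ℝ)..t, n τ * exp (-lam * τ)) + s * n t := by
  rw [← integral_add_adjacent_intervals (b := t - s) hmono.intervalIntegrable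
    hmono.intervalIntegrable]
  have hgnn : ∀ τ, 0 ≤ n τ * exp (-lam * τ) := fun τ => mul_nonneg (hnn τ) (exp_pos _).le
  gcongr
  · calc ∫ τ in (0 : ℝ)..t - s, n τ
        ≤ ∫ τ in (0 : ℝ)..t - s, exp (lam * (t - s)) * (n τ * exp (-lam * τ)) := by
          refine integral_mono_on (by linarith) hmono.intervalIntegrable
            ((intervalIntegrable_mul_exp hmono _ _).const_mul _) fun τ hτ => ?_
          rw [← mul_assoc, mul_comm (exp _), mul_assoc, ← exp_add]
          exact le_mul_of_one_le_right (hnn τ) (one_le_exp (by nlinarith [hτ.2]))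
      _ ≤ exp (lam * (t - s)) * ∫ τ in (0 : ℝ)..t, n τ * exp (-lam * τ) := by
          rw [intervalIntegral.integral_const_mul]
          gcongr
          exact integral_mono_interval le_rfl (by linarith) (by linarith)
            (Eventually.of_forall hgnn) (intervalIntegrable_mul_exp hmono _ _)
  · calc ∫ τ in t - s..t, n τ ≤ ∫ _ in t - s..t, n t :=
          integral_mono_on (by linarith) hmono.intervalIntegrable intervalIntegrable_const
            fun τ hτ => hmono hτ.2
      _ = s * n t := by simp

theorem tendsto_mean_clone_size_atTop (hmono : Monotone n) (hnn : ∀ τ, 0 ≤ n τ)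
    (hpos : ∀ τ, 0 < τ → 0 < n τ) (hlam : 0 < lam)
    (hfg : Tendsto (fun t => (∫ τ in (0 : ℝ)..t, n τ * exp (-lam * τ)) /
      (n t * exp (-lam * t))) atTop atTop) :
    Tendsto (fun t => exp (lam * t) * (∫ τ in (0 : ℝ)..t, n τ * exp (-lam * τ)) /
      ∫ τ in (0 : ℝ)..t, n τ) atTop atTop := by
  refine tendsto_atTop.2 fun M => ?_
  set M' := max M 1
  set s := log (2 * M') / lam
  have hs : 0 ≤ s := div_nonneg (log_nonneg (by linarith [le_max_right M 1])) hlam.le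
  have hM' : 0 < M' := by positivity
  have hMs : M' * exp (-lam * s) = 1 / 2 := by
    rw [show -lam * s = -log (2 * M') by simp only [s]; field_simp, exp_neg,
      exp_log (by positivity)]
    field_simp
  filter_upwards [hfg.eventually_ge_atTop (2 * M' * s), eventually_gt_atTop s] with t hfgt ht
  have ht0 : 0 < t := hs.trans_lt ht
  have hg : 0 < n t * exp (-lam * t) := mul_pos (hpos t ht0) (exp_pos _)
  have ha := intervalIntegral_pos_of_monotone hmono hpos ht0
  rw [le_div_iff₀ hg] at hfgt
  rw [le_div_iff₀ ha]
  set f := ∫ τ in (0 : ℝ)..t, n τ * exp (-lam * τ)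
  calc M * ∫ τ in (0 : ℝ)..t, n τ
      ≤ M' * (exp (lam * (t - s)) * f + s * n t) := by
        gcongr
        · exact le_max_left M 1
        · exact integral_le_exp_mul_integral_mul_exp_add hmono hnn hlam.le hs ht.le
    _ = exp (lam * t) * (M' * exp (-lam * s) * f + M' * s * (n t * exp (-lam * t))) := by
        have hnt : n t = exp (lam * t) * (n t * exp (-lam * t)) := by
          rw [mul_left_comm, ← exp_add, neg_mul, add_neg_cancel, exp_zero, mul_one]
        conv_lhs => rw [hnt]
        rw [show lam * (t - s) = lam * t + -lam * s by ring, exp_add]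
        ring
    _ ≤ exp (lam * t) * (f / 2 + f / 2) := by
        rw [hMs]
        exact mul_le_mul_of_nonneg_left (by linarith) (exp_pos _).le
    _ = exp (lam * t) * f := by ring

theorem tendsto_log_integral_div (hmono : Monotone n) (hpos : ∀ τ, 0 < τ → 0 < n τ)
    (hlog : Tendsto (fun t => log (n t) / t) atTop (𝓝 lam)) :
    Tendsto (fun t => log (∫ τ in (0 : ℝ)..t, n τ) / t) atTop (𝓝 lam) := by
  have hlower : Tendsto (fun t => log (n (t - 1)) / (t - 1) * (1 - t⁻¹)) atTop (𝓝 lam) := by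
    simpa [sub_eq_add_neg] using
      (hlog.comp (tendsto_atTop_add_const_right _ (-1) tendsto_id)).mul
        ((tendsto_const_nhds (x := (1 : ℝ))).sub tendsto_inv_atTop_zero)
  have hupper : Tendsto (fun t => log t / t + log (n t) / t) atTop (𝓝 lam) := by
    simpa using isLittleO_log_id_atTop.tendsto_div_nhds_zero.add hlog
  refine tendsto_of_tendsto_of_tendsto_of_le_of_le' hlower hupper ?_ ?_
  · filter_upwards [eventually_gt_atTop 1] with t ht
    have hnt : n (t - 1) ≤ ∫ τ in (0 : ℝ)..t, n τ :=
      calc n (t - 1) = ∫ _ in t - 1..t, n (t - 1) := by simp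
        _ ≤ ∫ τ in t - 1..t, n τ := integral_mono_on (by linarith) intervalIntegrable_const
            hmono.intervalIntegrable fun τ hτ => hmono hτ.1
        _ ≤ ∫ τ in (0 : ℝ)..t, n τ :=
            integral_mono_interval (by linarith) (by linarith) le_rfl
              (ae_restrict_of_forall_mem measurableSet_Ioc fun τ hτ => (hpos τ hτ.1).le)
              hmono.intervalIntegrable
    calc log (n (t - 1)) / (t - 1) * (1 - t⁻¹) = log (n (t - 1)) / t := by
          field_simp [(by linarith : t - 1 ≠ 0)]
      _ ≤ log (∫ τ in (0 : ℝ)..t, n τ) / t :=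
          div_le_div_of_nonneg_right (log_le_log (hpos _ (by linarith)) hnt) (by linarith)
  · filter_upwards [eventually_gt_atTop 0] with t ht
    have hnt : ∫ τ in (0 : ℝ)..t, n τ ≤ t * n t := by
      simpa using integral_mono_on (μ := volume) ht.le hmono.intervalIntegrable
        (intervalIntegrable_const (c := n t)) fun τ hτ => hmono hτ.2
    have ha := intervalIntegral_pos_of_monotone hmono hpos ht
    rw [← add_div, ← log_mul ht.ne' (hpos t ht).ne']
    gcongr

theorem eventually_log_integral_div_lt {ψ : ℝ → ℝ} {μ c : ℝ}
    (hψ : ∀ b, IntervalIntegrable ψ volume 0 b) (hpos : ∀ τ, 0 < τ → 0 < ψ τ)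
    (hlog : Tendsto (fun t => log (ψ t) / t) atTop (𝓝 μ)) (hμ : 0 ≤ μ) (hc : μ < c) :
    ∀ᶠ t in atTop, log (∫ τ in (0 : ℝ)..t, ψ τ) / t < c := by
  obtain ⟨ν, hμν, hνc⟩ := exists_between hc
  obtain ⟨T, hT⟩ := eventually_atTop.1 <|
    (hlog.eventually (eventually_lt_nhds hμν)).and (eventually_gt_atTop 0)
  have hψle : ∀ τ, T ≤ τ → ψ τ ≤ exp (ν * τ) := fun τ hτ =>
    (le_exp_log _).trans <| exp_le_exp.2 <| ((div_lt_iff₀ (hT τ hτ).2).1 (hT τ hτ).1).le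
  set K := ∫ τ in (0 : ℝ)..T, ψ τ
  have hrate : Tendsto (fun t => (log 2 + log t) / t + ν) atTop (𝓝 ν) := by
    simpa [add_div] using ((tendsto_const_nhds.div_atTop tendsto_id).add
      isLittleO_log_id_atTop.tendsto_div_nhds_zero).add_const ν
  filter_upwards [hrate.eventually (eventually_lt_nhds hνc),
    eventually_ge_atTop T, eventually_ge_atTop K] with t hlt hTt hKt
  have ht : 0 < t := (hT T le_rfl).2.trans_le hTt
  have hint : ∫ τ in (0 : ℝ)..t, ψ τ ≤ 2 * t * exp (ν * t) := by
    rw [← integral_add_adjacent_intervals (hψ T) ((hψ T).symm.trans (hψ t))]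
    have htail : ∫ τ in T..t, ψ τ ≤ t * exp (ν * t) :=
      calc ∫ τ in T..t, ψ τ ≤ ∫ _ in T..t, exp (ν * t) :=
            integral_mono_on hTt ((hψ T).symm.trans (hψ t)) intervalIntegrable_const
              fun τ hτ => (hψle τ hτ.1).trans
                (exp_le_exp.2 (mul_le_mul_of_nonneg_left hτ.2 (hμ.trans hμν.le)))
        _ ≤ t * exp (ν * t) := by
            rw [intervalIntegral.integral_const, smul_eq_mul]
            gcongr
            linarith [(hT T le_rfl).2]
    nlinarith [one_le_exp (mul_nonneg (hμ.trans hμν.le) ht.le)]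
  have hpos_int := intervalIntegral_pos_of_pos_on (hψ t) (fun τ hτ => hpos τ hτ.1) ht
  calc log (∫ τ in (0 : ℝ)..t, ψ τ) / t ≤ log (2 * t * exp (ν * t)) / t := by gcongr
    _ = (log 2 + log t) / t + ν := by
        rw [log_mul (by positivity) (exp_pos _).ne', log_mul two_ne_zero ht.ne', log_exp]
        field_simp
    _ < c := hlt

theorem tendsto_log_integral_mul_exp_div (hmono : Monotone n) (hpos : ∀ τ, 0 < τ → 0 < n τ)
    (hlog : Tendsto (fun t => log (n t) / t) atTop (𝓝 lam)) :
    Tendsto (fun t => log (∫ τ in (0 : ℝ)..t, n τ * exp (-lam * τ)) / t) atTop (𝓝 0) := by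
  have hgpos : ∀ τ, 0 < τ → 0 < n τ * exp (-lam * τ) := fun τ hτ =>
    mul_pos (hpos τ hτ) (exp_pos _)
  have hglog : Tendsto (fun t => log (n t * exp (-lam * t)) / t) atTop (𝓝 0) := by
    refine (sub_self lam ▸ hlog.sub_const lam).congr' ?_
    filter_upwards [eventually_gt_atTop 0] with t ht
    rw [log_mul (hpos t ht).ne' (exp_pos _).ne', log_exp]
    field_simp
    ring
  refine tendsto_order.2 ⟨fun c hc => ?_, fun c hc =>
    eventually_log_integral_div_lt (intervalIntegrable_mul_exp hmono 0) hgpos hglog le_rfl hc⟩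
  have hf1 := intervalIntegral_mul_exp_pos (lam := lam) hmono hpos one_pos
  filter_upwards [(tendsto_const_nhds.div_atTop tendsto_id).eventually (eventually_gt_nhds hc),
    eventually_ge_atTop 1] with t hct ht
  refine hct.trans_le (div_le_div_of_nonneg_right (log_le_log hf1 ?_) (zero_le_one.trans ht))
  exact integral_mono_interval le_rfl zero_le_one ht
    (ae_restrict_of_forall_mem measurableSet_Ioc fun τ hτ => (hgpos τ hτ.1).le)
    (intervalIntegrable_mul_exp hmono 0 t)

theorem tendsto_log_mean_clone_size_div (hmono : Monotone n) (hpos : ∀ τ, 0 < τ → 0 < n τ)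
    (hlog : Tendsto (fun t => log (n t) / t) atTop (𝓝 lam)) :
    Tendsto (fun t => log (exp (lam * t) * (∫ τ in (0 : ℝ)..t, n τ * exp (-lam * τ)) /
      ∫ τ in (0 : ℝ)..t, n τ) / t) atTop (𝓝 0) := by
  have hsum := ((tendsto_log_integral_mul_exp_div hmono hpos hlog).const_add lam).sub
    (tendsto_log_integral_div hmono hpos hlog)
  rw [add_zero, sub_self] at hsum
  refine hsum.congr' ?_
  filter_upwards [eventually_gt_atTop 0] with t ht
  rw [log_div (mul_pos (exp_pos _) (intervalIntegral_mul_exp_pos hmono hpos ht)).ne'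
    (intervalIntegral_pos_of_monotone hmono hpos ht).ne',
    log_mul (exp_pos _).ne' (intervalIntegral_mul_exp_pos hmono hpos ht).ne', log_exp]
  field_simp

end Integrals

/-- If `δ* = λ = 1 − β > 0`, the mean clone size
`E(Y_t) = e^{λt} (∫_0^t n_τ e^{−λτ} dτ)/(∫_0^t n_τ dτ)` diverges subexponentially:
it tends to `∞` while `(log E(Y_t))/t → 0`. -/
theorem mean_clone_size_neutral_subexponential_divergence
    (β : ℝ) (hβ : β ∈ Set.Ico (0 : ℝ) 1)
    (n : ℝ → ℝ) (hn : Assumption1 n)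
    (hδlim : Filter.Tendsto (fun t : ℝ => Real.log (n t) / t) Filter.atTop
      (nhds (1 - β))) :
    Filter.Tendsto
      (fun t : ℝ =>
        Real.exp ((1 - β) * t) * (∫ τ in (0:ℝ)..t, n τ * Real.exp (-(1 - β) * τ)) /
          (∫ τ in (0:ℝ)..t, n τ))
      Filter.atTop Filter.atTop ∧
    Filter.Tendsto
      (fun t : ℝ =>
        Real.log
          (Real.exp ((1 - β) * t) * (∫ τ in (0:ℝ)..t, n τ * Real.exp (-(1 - β) * τ)) /
            (∫ τ in (0:ℝ)..t, n τ)) / t)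
      Filter.atTop (nhds 0) := by
  have hmono := hn.monotone
  have hpos := hn.2.2.2.1
  exact ⟨tendsto_mean_clone_size_atTop hmono hn.nonneg hpos (by linarith [hβ.2])
      (tendsto_integral_mul_exp_div_atTop hmono hpos fun _ hu => hn.tendsto_shift_div hδlim hu),
    tendsto_log_mean_clone_size_div hmono hpos hδlim⟩
end

section
/- Let β = 0 (immortal mutants, so λ = 1) and let n satisfy Assumption 1 with δ* > 0. Then for every integer k ≥ 1, lim_{t→∞} (1/a_t)·∫_0^t n_τ · e^{−(t−τ)}(1 − e^{−(t−τ)})^{k−1} dτ = δ*·(k−1)!/((δ*+1)(δ*+2)⋯(δ*+k)); that is, the clone size distribution converges to the Yule–Simon distribution with parameter δ*. -/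
open Filter Real intervalIntegral

open MeasureTheory Set Topology

/-!
After the substitution `u = t - τ` and division by `n t`, both integrals have the kernel
`n (t - u) / n t`. The limit `L u` of this ratio (Assumption 1) satisfies
`log n t - log n (t - u) → -log L u`; averaging these increments along `u ℕ` (Cesàro) and using
`log n t / t → δ` gives `L u = exp (-δ u)`. As the ratio at `u = 1` is eventually below
`exp (-δ / 2)`, the kernel is dominated by `C exp (-δ u / 2)`, so dominated convergence applies.
The two limits are `1 / δ` and `∫ exp (-(δ + 1) u) (1 - exp (-u)) ^ (k - 1) du
= (k - 1)! / ((δ + 1) ⋯ (δ + k))`, the latter by integration by parts in `k`.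
-/

theorem eq_mul_of_tendsto_sub_of_tendsto_div {g : ℝ → ℝ} {δ c x : ℝ} (hx : 0 < x)
    (hdiv : Tendsto (fun t => g t / t) atTop (𝓝 δ))
    (hsub : Tendsto (fun t => g t - g (t - x)) atTop (𝓝 c)) : c = δ * x := by
  have hmx : Tendsto (fun m : ℕ => (m : ℝ) * x) atTop atTop :=
    tendsto_natCast_atTop_atTop.atTop_mul_const hx
  have hsteps : Tendsto (fun i : ℕ => g ((i + 1 : ℕ) * x) - g (i * x)) atTop (𝓝 c) := by
    refine (hsub.comp (hmx.comp (tendsto_add_atTop_nat 1))).congr fun i => ?_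
    simp [add_mul]
  have hcesaro : Tendsto (fun m : ℕ => (m : ℝ)⁻¹ * (g (m * x) - g 0)) atTop (𝓝 c) := by
    refine hsteps.cesaro.congr fun m => ?_
    rw [Finset.sum_range_sub (fun i : ℕ => g (i * x))]
    simp
  have hslope : Tendsto (fun m : ℕ => (m : ℝ)⁻¹ * (g (m * x) - g 0)) atTop (𝓝 (δ * x)) := by
    have := ((hdiv.comp hmx).mul_const x).sub
      ((tendsto_inv_atTop_zero.comp tendsto_natCast_atTop_atTop).mul_const (g 0))
    rw [zero_mul, sub_zero] at this
    refine this.congr' ?_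
    filter_upwards [eventually_gt_atTop 0] with m hm
    simp only [Function.comp_apply]
    field_simp
  exact tendsto_nhds_unique hcesaro hslope

theorem abs_one_sub_exp_neg_pow_le_one {u : ℝ} (hu : 0 ≤ u) (m : ℕ) :
    |(1 - exp (-u)) ^ m| ≤ 1 := by
  rw [abs_pow]
  refine pow_le_one₀ (abs_nonneg _) (abs_le.2 ⟨?_, ?_⟩) <;>
    linarith [exp_pos (-u), exp_le_one_iff.2 (neg_nonpos.2 hu)]

theorem integrableOn_exp_neg_mul_mul_one_sub_exp_neg_pow {c : ℝ} (hc : 0 < c) (m : ℕ) :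
    IntegrableOn (fun u => exp (-c * u) * (1 - exp (-u)) ^ m) (Ioi 0) := by
  refine (integrableOn_exp_mul_Ioi (neg_lt_zero.2 hc) 0).mono' (by fun_prop) ?_
  refine (ae_restrict_iff' measurableSet_Ioi).2 (ae_of_all _ fun u hu => ?_)
  rw [norm_mul, norm_of_nonneg (exp_pos _).le]
  exact mul_le_of_le_one_right (exp_pos _).le (abs_one_sub_exp_neg_pow_le_one (le_of_lt hu) m)

theorem mul_integral_exp_neg_mul_mul_one_sub_exp_neg_pow_succ (m : ℕ) {c : ℝ} (hc : 0 < c) :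
    c * ∫ u in Ioi 0, exp (-c * u) * (1 - exp (-u)) ^ (m + 1)
      = (m + 1) * ∫ u in Ioi 0, exp (-(c + 1) * u) * (1 - exp (-u)) ^ m := by
  have hderiv : ∀ u ∈ Ici (0 : ℝ), HasDerivAt (fun u => exp (-c * u) * (1 - exp (-u)) ^ (m + 1))
      ((m + 1) * (exp (-(c + 1) * u) * (1 - exp (-u)) ^ m)
        - c * (exp (-c * u) * (1 - exp (-u)) ^ (m + 1))) u := by
    intro u _
    have h := ((hasDerivAt_id' u).const_mul (-c)).exp.fun_mul
      (((hasDerivAt_id' u).neg.exp.const_sub 1).fun_pow (m + 1))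
    refine h.congr_deriv ?_
    rw [show -(c + 1) * u = -c * u + -u by ring, exp_add]
    simp only [Pi.neg_apply, Nat.add_sub_cancel]
    push_cast
    ring
  have hlim : Tendsto (fun u => exp (-c * u) * (1 - exp (-u)) ^ (m + 1)) atTop (𝓝 0) := by
    simpa using (tendsto_exp_atBot.comp (tendsto_id.const_mul_atTop_of_neg
      (neg_lt_zero.2 hc))).mul ((tendsto_exp_neg_atTop_nhds_zero.const_sub 1).pow (m + 1))
  have hint₁ := (integrableOn_exp_neg_mul_mul_one_sub_exp_neg_pow (c := c + 1) (by linarith)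
    m).const_mul ((m : ℝ) + 1)
  have hint₂ := (integrableOn_exp_neg_mul_mul_one_sub_exp_neg_pow hc (m + 1)).const_mul c
  have hibp := integral_Ioi_of_hasDerivAt_of_tendsto' hderiv (hint₁.sub hint₂) hlim
  rw [MeasureTheory.integral_sub hint₁ hint₂, MeasureTheory.integral_const_mul,
    MeasureTheory.integral_const_mul, show exp (-c * 0) * (1 - exp (-0)) ^ (m + 1) = 0 by simp,
    sub_zero, sub_eq_zero] at hibp
  exact hibp.symm

theorem integral_exp_neg_mul_mul_one_sub_exp_neg_pow (m : ℕ) {c : ℝ} (hc : 0 < c) :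
    ∫ u in Ioi 0, exp (-c * u) * (1 - exp (-u)) ^ m
      = (m.factorial : ℝ) / ∏ j ∈ Finset.range (m + 1), (c + j) := by
  induction m generalizing c with
  | zero =>
    simp only [pow_zero, mul_one, integral_exp_mul_Ioi (neg_lt_zero.2 hc)]
    simp
  | succ m ih =>
    have hrec := mul_integral_exp_neg_mul_mul_one_sub_exp_neg_pow_succ m hc
    rw [ih (by linarith)] at hrec
    have hshift : ∏ j ∈ Finset.range (m + 1), (c + ((j + 1 : ℕ) : ℝ))
        = ∏ j ∈ Finset.range (m + 1), (c + 1 + j) :=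
      Finset.prod_congr rfl fun j _ => by push_cast; ring
    have hprod : 0 < ∏ j ∈ Finset.range (m + 1), (c + 1 + j) :=
      Finset.prod_pos fun j _ => by positivity
    rw [mul_div_assoc', eq_div_iff hprod.ne'] at hrec
    rw [Finset.prod_range_succ', hshift, Nat.cast_zero, add_zero, eq_div_iff (by positivity),
      Nat.factorial_succ]
    push_cast
    linear_combination hrec

/-- `P(Z_u = k)` for the unit-rate Yule process started from one individual; only meaningful for
`1 ≤ k`, since `k - 1` truncates at `k = 0`. -/
noncomputable def yuleProb (k : ℕ) (u : ℝ) : ℝ := exp (-u) * (1 - exp (-u)) ^ (k - 1)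

theorem abs_yuleProb_le_one (k : ℕ) {u : ℝ} (hu : 0 ≤ u) : |yuleProb k u| ≤ 1 := by
  rw [yuleProb, abs_mul, abs_of_pos (exp_pos _)]
  exact mul_le_one₀ (exp_le_one_iff.2 (neg_nonpos.2 hu)) (abs_nonneg _)
    (abs_one_sub_exp_neg_pow_le_one hu _)

theorem integral_exp_neg_mul_mul_yuleProb {k : ℕ} (hk : 1 ≤ k) {δ : ℝ} (hδ : 0 < δ + 1) :
    ∫ u in Ioi 0, exp (-δ * u) * yuleProb k u
      = ((k - 1).factorial : ℝ) / ∏ j ∈ Finset.Icc 1 k, (δ + j) := by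
  have hexp : ∀ u, exp (-δ * u) * yuleProb k u = exp (-(δ + 1) * u) * (1 - exp (-u)) ^ (k - 1) :=
    fun u => by rw [yuleProb, ← mul_assoc, ← exp_add]; ring_nf
  simp_rw [hexp, integral_exp_neg_mul_mul_one_sub_exp_neg_pow _ hδ, Nat.sub_add_cancel hk,
    ← Finset.Ico_add_one_right_eq_Icc, Finset.prod_Ico_eq_prod_range, Nat.add_sub_cancel]
  congr 1
  exact Finset.prod_congr rfl fun j _ => by push_cast; ring

theorem tendsto_setIntegral_Ioi_div_mul_of_dominated {n f ℓ b : ℝ → ℝ} (hn : Measurable n)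
    (hf : Measurable f) (hf_le : ∀ u, 0 < u → |f u| ≤ 1) (hb : IntegrableOn b (Ioi 0))
    (hdom : ∀ᶠ t in atTop, ∀ u, 0 < u → |n (t - u) / n t| ≤ b u)
    (hlim : ∀ u, 0 < u → Tendsto (fun t => n (t - u) / n t) atTop (𝓝 (ℓ u))) :
    Tendsto (fun t => ∫ u in Ioi 0, n (t - u) / n t * f u) atTop
      (𝓝 (∫ u in Ioi 0, ℓ u * f u)) := by
  refine tendsto_integral_filter_of_dominated_convergence b (Eventually.of_forall fun t =>
    (((hn.comp (measurable_const.sub measurable_id)).div_const _).mul hf).aestronglyMeasurable)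
    ?_ hb ((ae_restrict_iff' measurableSet_Ioi).2 (ae_of_all _ fun u hu => (hlim u hu).mul_const _))
  filter_upwards [hdom] with t ht
  refine (ae_restrict_iff' measurableSet_Ioi).2 (ae_of_all _ fun u hu => ?_)
  rw [norm_mul, Real.norm_eq_abs, Real.norm_eq_abs]
  exact (mul_le_mul (ht u hu) (hf_le u hu) (abs_nonneg _) ((abs_nonneg _).trans (ht u hu))).trans_eq
    (mul_one _)

theorem Monotone.apply_sub_le_of_apply_sub_one_le {n : ℝ → ℝ} (hmono : Monotone n)
    (hnonneg : ∀ t, 0 ≤ n t) {ρ T : ℝ} (hρ : 0 ≤ ρ) (hT : 0 ≤ T)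
    (hstep : ∀ t, T ≤ t → n (t - 1) ≤ exp (-ρ) * n t) {t u : ℝ} (ht : T ≤ t) (hu : 0 ≤ u)
    (hut : u ≤ t) : n (t - u) ≤ exp (ρ * (T + 1)) * exp (-(ρ * u)) * n t := by
  have hiter : ∀ m : ℕ, ∀ s, T + m ≤ s → n (s - m) ≤ exp (-(ρ * m)) * n s := by
    intro m
    induction m with
    | zero => intro s _; simp
    | succ m ih =>
      intro s hs
      push_cast at hs ⊢
      calc n (s - (m + 1)) = n (s - 1 - m) := by ring_nf
        _ ≤ exp (-(ρ * m)) * n (s - 1) := ih _ (by linarith)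
        _ ≤ exp (-(ρ * m)) * (exp (-ρ) * n s) := by
          gcongr; exact hstep s (by linarith [m.cast_nonneg (α := ℝ)])
        _ = exp (-(ρ * (m + 1))) * n s := by rw [← mul_assoc, ← exp_add]; ring_nf
  -- step back from `t` in unit steps as far as possible without going below `T`
  set m := ⌊min u (t - T)⌋₊
  have hm_le : (m : ℝ) ≤ min u (t - T) := Nat.floor_le (le_min hu (by linarith))
  have hm_gt : u - T < m + 1 := by
    have := Nat.lt_floor_add_one (min u (t - T))
    rcases min_cases u (t - T) with h | h <;> linarith [h.1]
  calc n (t - u) ≤ n (t - m) := hmono (by linarith [min_le_left u (t - T)])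
    _ ≤ exp (-(ρ * m)) * n t := hiter m t (by linarith [min_le_right u (t - T)])
    _ ≤ exp (ρ * (T + 1)) * exp (-(ρ * u)) * n t := by
      rw [← exp_add]
      exact mul_le_mul_of_nonneg_right (exp_le_exp.2 (by nlinarith)) (hnonneg t)

theorem Assumption1.eq_zero_of_neg {n : ℝ → ℝ} (hn : Assumption1 n) {τ : ℝ} (hτ : τ < 0) :
    n τ = 0 :=
  hn.1 τ hτ

theorem Assumption1.pos {n : ℝ → ℝ} (hn : Assumption1 n) {τ : ℝ} (hτ : 0 < τ) : 0 < n τ :=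
  hn.2.2.2.1 τ hτ

theorem Assumption1.nonneg_s13 {n : ℝ → ℝ} (hn : Assumption1 n) (τ : ℝ) : 0 ≤ n τ := by
  rcases lt_trichotomy τ 0 with h | rfl | h
  · exact (hn.eq_zero_of_neg h).ge
  · exact ge_of_tendsto hn.2.2.1 (eventually_mem_nhdsWithin.mono fun s hs => (hn.pos hs).le)
  · exact (hn.pos h).le

theorem Assumption1.monotone_s13 {n : ℝ → ℝ} (hn : Assumption1 n) : Monotone n := by
  intro a b hab
  have hb_nonneg := hn.nonneg_s13 b
  obtain ⟨hneg, -, hright, -, hmono, -⟩ := hn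
  rcases lt_trichotomy a 0 with ha | rfl | ha
  · rw [hneg a ha]; exact hb_nonneg
  · rcases hab.eq_or_lt with rfl | hb
    · rfl
    · exact le_of_tendsto hright
        (mem_of_superset (Ioo_mem_nhdsGT hb) fun s hs => hmono hs.1 hb hs.2.le)
  · exact hmono ha (ha.trans_le hab) hab

theorem Assumption1.tendsto_div_sub {n : ℝ → ℝ} (hn : Assumption1 n) {δ : ℝ}
    (hδ : Tendsto (fun t => log (n t) / t) atTop (𝓝 δ)) {x : ℝ} (hx : 0 < x) :
    Tendsto (fun t => n (t - x) / n t) atTop (𝓝 (exp (-δ * x))) := by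
  obtain ⟨L, hL, hlim⟩ := hn.2.2.2.2.2 x hx.le
  have hlog : Tendsto (fun t => log (n t) - log (n (t - x))) atTop (𝓝 (-log L)) := by
    refine ((continuousAt_log hL.ne').tendsto.comp hlim).neg.congr' ?_
    filter_upwards [eventually_gt_atTop x] with t ht
    rw [Function.comp_apply, log_div (hn.pos (by linarith)).ne' (hn.pos (by linarith)).ne']
    ring
  have hL_eq : L = exp (-δ * x) := by
    rw [neg_mul, ← eq_mul_of_tendsto_sub_of_tendsto_div hx hδ hlog, neg_neg, exp_log hL]
  rwa [hL_eq] at hlim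

theorem Assumption1.exists_div_le_exp {n : ℝ → ℝ} (hn : Assumption1 n) {δ : ℝ}
    (hδ : Tendsto (fun t => log (n t) / t) atTop (𝓝 δ)) (hδpos : 0 < δ) :
    ∃ C ρ, 0 < ρ ∧ ∀ᶠ t in atTop, ∀ u, 0 < u → n (t - u) / n t ≤ C * exp (-ρ * u) := by
  have hev : ∀ᶠ t in atTop, n (t - 1) / n t < exp (-(δ / 2)) :=
    (hn.tendsto_div_sub hδ one_pos).eventually_lt_const (exp_lt_exp.2 (by linarith))
  obtain ⟨T, hT⟩ := eventually_atTop.1 hev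
  set T' := max T 1
  have hstep : ∀ s, T' ≤ s → n (s - 1) ≤ exp (-(δ / 2)) * n s := fun s hs =>
    ((div_lt_iff₀ (hn.pos (by linarith [le_max_right T 1]))).1 (hT s (le_of_max_le_left hs))).le
  refine ⟨exp (δ / 2 * (T' + 1)), δ / 2, by positivity, ?_⟩
  filter_upwards [eventually_ge_atTop T'] with t ht u hu
  rw [div_le_iff₀ (hn.pos (by linarith [le_max_right T 1])), neg_mul]
  rcases le_or_gt u t with hut | htu
  · exact hn.monotone_s13.apply_sub_le_of_apply_sub_one_le hn.nonneg_s13 (by positivity)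
      (by positivity) hstep ht hu.le hut
  · rw [hn.eq_zero_of_neg (by linarith)]
    exact mul_nonneg (by positivity) (hn.nonneg_s13 t)

theorem Assumption1.intervalIntegral_mul_sub_eq {n : ℝ → ℝ} (hn : Assumption1 n) (h : ℝ → ℝ)
    {t : ℝ} (ht : 0 ≤ t) : ∫ τ in 0..t, n τ * h (t - τ) = ∫ u in Ioi 0, n (t - u) * h u := by
  have hsub :=
    intervalIntegral.integral_comp_sub_left (fun u => n (t - u) * h u) (a := 0) (b := t) t
  simp only [sub_sub_cancel, sub_self, sub_zero] at hsub
  rw [hsub, intervalIntegral.integral_of_le ht]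
  refine (setIntegral_eq_of_subset_of_forall_sdiff_eq_zero measurableSet_Ioi Ioc_subset_Ioi_self
    fun u hu => ?_).symm
  have htu : t < u := by simp_all
  rw [hn.eq_zero_of_neg (by linarith), zero_mul]

theorem Assumption1.tendsto_intervalIntegral_mul_sub_div {n : ℝ → ℝ} (hn : Assumption1 n)
    {δ : ℝ} (hδ : Tendsto (fun t => log (n t) / t) atTop (𝓝 δ)) (hδpos : 0 < δ) {f : ℝ → ℝ}
    (hf : Measurable f) (hf_le : ∀ u, 0 < u → |f u| ≤ 1) :
    Tendsto (fun t => (∫ τ in 0..t, n τ * f (t - τ)) / n t) atTop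
      (𝓝 (∫ u in Ioi 0, exp (-δ * u) * f u)) := by
  obtain ⟨C, ρ, hρ, hdom⟩ := hn.exists_div_le_exp hδ hδpos
  have hbound : ∀ᶠ t in atTop, ∀ u, 0 < u → |n (t - u) / n t| ≤ C * exp (-ρ * u) := by
    filter_upwards [hdom] with t ht u hu
    rw [abs_of_nonneg (div_nonneg (hn.nonneg_s13 _) (hn.nonneg_s13 _))]
    exact ht u hu
  refine (tendsto_setIntegral_Ioi_div_mul_of_dominated hn.monotone_s13.measurable hf hf_le
    ((integrableOn_exp_mul_Ioi (neg_lt_zero.2 hρ) 0).const_mul C) hbound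
    fun u hu => hn.tendsto_div_sub hδ hu).congr' ?_
  filter_upwards [eventually_ge_atTop 0] with t ht
  rw [hn.intervalIntegral_mul_sub_eq f ht, ← MeasureTheory.integral_div]
  simp only [div_mul_eq_mul_div]

/-- For immortal mutants (`β = 0`, pure birth process with
`P(Z_u = k) = e^{−u}(1−e^{−u})^{k−1}`) and exponential-type wild-type growth (`δ* > 0`),
the clone size distribution converges to the Yule–Simon distribution with parameter `δ*`:
`lim_{t→∞} (1/a_t)∫_0^t n_τ e^{−(t−τ)}(1−e^{−(t−τ)})^{k−1} dτ
  = δ* (k−1)! / ((δ*+1)(δ*+2)⋯(δ*+k))`. -/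
theorem yule_simon_limit
    (n : ℝ → ℝ) (hn : Assumption1 n) (δ : ℝ)
    (hδlim : Filter.Tendsto (fun t : ℝ => Real.log (n t) / t) Filter.atTop (nhds δ))
    (hδpos : 0 < δ) :
    ∀ k : ℕ, 1 ≤ k →
      Filter.Tendsto
        (fun t : ℝ =>
          (1 / ∫ τ in (0:ℝ)..t, n τ) *
            ∫ τ in (0:ℝ)..t,
              n τ * (Real.exp (-(t - τ)) * (1 - Real.exp (-(t - τ))) ^ (k - 1)))
        Filter.atTop
        (nhds (δ * (Nat.factorial (k - 1) : ℝ) / ∏ j ∈ Finset.Icc 1 k, (δ + (j : ℝ)))) := by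
  intro k hk
  have hmass := hn.tendsto_intervalIntegral_mul_sub_div hδlim hδpos (f := fun _ => 1)
    measurable_const fun _ _ => by simp
  have hclone := hn.tendsto_intervalIntegral_mul_sub_div hδlim hδpos (f := yuleProb k)
    (by unfold yuleProb; fun_prop) fun u hu => abs_yuleProb_le_one k hu.le
  simp only [mul_one, integral_exp_mul_Ioi (neg_lt_zero.2 hδpos), mul_zero, exp_zero,
    neg_div_neg_eq] at hmass
  rw [integral_exp_neg_mul_mul_yuleProb hk (by linarith)] at hclone
  rw [show δ * ((k - 1).factorial : ℝ) / ∏ j ∈ Finset.Icc 1 k, (δ + j)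
      = ((k - 1).factorial : ℝ) / (∏ j ∈ Finset.Icc 1 k, (δ + j)) / (1 / δ) by field_simp]
  refine (hclone.div hmass (by positivity)).congr' ?_
  filter_upwards [eventually_gt_atTop 0] with t ht
  rw [Pi.div_apply, div_div_div_cancel_right₀ (hn.pos ht).ne', one_div_mul_eq_div]
  rfl
end

section
/- Let β ∈ [0,1), λ = 1−β, let n satisfy Assumption 1, and set γ* = δ*/λ. Suppose that for every integer k ≥ 1 the limit L_k = lim_{t→∞} (1/n_t)·∫_0^t n_τ·P(Z_{t−τ} = k) dτ exists. Then lim_{k→∞} k^{γ*+1}·L_k = Γ(1+γ*)/λ^{γ*}, where Γ is the Gamma function; i.e. the large-time clone size distribution has a power-law tail with exponent 1+γ*. -/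
open Filter Real intervalIntegral

/-- `S u = (1 - β e^{-λu})/(1 - e^{-λu})` with `λ = 1 - β`. -/
noncomputable def birthDeathS (β u : ℝ) : ℝ :=
  (1 - β * Real.exp (-(1 - β) * u)) / (1 - Real.exp (-(1 - β) * u))

/-- `P(Z_u = k) = (1 - β/S_u)(S_u - 1) S_u^{-k}` for `k ≥ 1`. -/
noncomputable def birthDeathPMF (β u : ℝ) (k : ℕ) : ℝ :=
  (1 - β / birthDeathS β u) * (birthDeathS β u - 1) * ((birthDeathS β u)⁻¹) ^ k

open Set MeasureTheory Topology

/-! The ratio `n (t - u) / n t` has a positive limit `g u`; comparing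
`log n t - log n (t - u) → -log g u` with `log n t / t → δ` along the progression `t = N u`
(Cesàro) forces `g u = exp (-δ u)`. As the ratio is at most `1`, dominated convergence turns `L_k`
into the Laplace transform `∫₀^∞ e^{-δu} P(Z_u = k) du`, which the substitution `x = e^{-λu}`
makes `λ ∫₀¹ x^γ (1-x)^{k-1} / (1-βx)^{k+1} dx`. Rescaling `x = s / k` and dominated convergence
again, with `(1 - y) / (1 - βy) ≤ e^{-λy}` as the source of a dominating function, give
`k^{γ+1} L_k → λ ∫₀^∞ s^γ e^{-λs} ds = Γ(1+γ) / λ^γ`. -/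

theorem eq_mul_of_tendsto_sub_of_tendsto_div_s14 {f : ℝ → ℝ} {δ c u : ℝ} (hu : 0 ≤ u)
    (hf : Tendsto (fun t => f t / t) atTop (𝓝 δ))
    (hinc : Tendsto (fun t => f t - f (t - u)) atTop (𝓝 c)) : c = δ * u := by
  rcases hu.eq_or_lt with rfl | hu
  · simpa using tendsto_nhds_unique hinc (by simp)
  have hlin : Tendsto (fun N : ℕ => (N : ℝ) * u) atTop atTop :=
    tendsto_natCast_atTop_atTop.atTop_mul_const hu
  have hsteps : Tendsto (fun i : ℕ => f (((i + 1 : ℕ) : ℝ) * u) - f ((i : ℝ) * u)) atTop (𝓝 c) :=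
    (hinc.comp ((tendsto_add_atTop_iff_nat 1).2 hlin)).congr fun i => by simp [add_mul]
  have hcesaro := hsteps.cesaro
  simp only [Finset.sum_range_sub (fun i : ℕ => f ((i : ℝ) * u))] at hcesaro
  -- Cesàro: `(f (N u) - f 0) / N` tends both to `c` and, through `f (N u) / (N u) → δ`, to `δ u`.
  have hdiv : Tendsto (fun N : ℕ => (N : ℝ)⁻¹ * (f ((N : ℝ) * u) - f ((0 : ℕ) * u))) atTop
      (𝓝 (δ * u - 0 * f 0)) := by
    refine (((hf.comp hlin).mul_const u).sub
      ((tendsto_inv_atTop_zero.comp tendsto_natCast_atTop_atTop).mul_const (f 0))).congr' ?_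
    filter_upwards [eventually_ne_atTop 0] with N hN
    simp only [Function.comp_apply, Nat.cast_zero, zero_mul]
    field_simp
  simpa using tendsto_nhds_unique hcesaro hdiv

theorem tendsto_div_comp_sub_of_tendsto_log_div {n : ℝ → ℝ} {δ u : ℝ}
    (hpos : ∀ τ, 0 < τ → 0 < n τ)
    (hlim : ∀ x, 0 ≤ x → ∃ L, 0 < L ∧ Tendsto (fun t => n (t - x) / n t) atTop (𝓝 L))
    (hδ : Tendsto (fun t => log (n t) / t) atTop (𝓝 δ)) (hu : 0 ≤ u) :
    Tendsto (fun t => n (t - u) / n t) atTop (𝓝 (exp (-δ * u))) := by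
  obtain ⟨L, hL0, hL⟩ := hlim u hu
  have hlog : Tendsto (fun t => log (n t) - log (n (t - u))) atTop (𝓝 (-log L)) := by
    refine (hL.log hL0.ne').neg.congr' ?_
    filter_upwards [eventually_gt_atTop u] with t ht
    rw [log_div (hpos _ (by linarith)).ne' (hpos _ (by linarith)).ne']
    ring
  have hL_eq := eq_mul_of_tendsto_sub_of_tendsto_div_s14 hu hδ hlog
  rwa [neg_mul, ← hL_eq, neg_neg, exp_log hL0]

theorem nonneg_of_tendsto_log_div {n : ℝ → ℝ} {δ : ℝ} (hpos : ∀ τ, 0 < τ → 0 < n τ)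
    (hmono : MonotoneOn n (Ioi 0)) (hδ : Tendsto (fun t => log (n t) / t) atTop (𝓝 δ)) :
    0 ≤ δ := by
  refine le_of_tendsto_of_tendsto ((tendsto_const_nhds (x := log (n 1))).div_atTop tendsto_id) hδ ?_
  filter_upwards [eventually_gt_atTop 1] with t ht
  have hn : n 1 ≤ n t := hmono (mem_Ioi.2 one_pos) (mem_Ioi.2 (by linarith)) ht.le
  exact div_le_div_of_nonneg_right (log_le_log (hpos 1 one_pos) hn) (by simp only [id]; linarith)

theorem one_div_mul_integral_comp_sub (n f : ℝ → ℝ) {t : ℝ} (ht : 0 ≤ t) :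
    (1 / n t) * ∫ τ in (0:ℝ)..t, n τ * f (t - τ)
      = ∫ u in Ioi 0, (Iio t).indicator (fun u => n (t - u) / n t * f u) u := by
  have hreflect := intervalIntegral.integral_comp_sub_left (fun τ => n τ * f (t - τ)) t
    (a := 0) (b := t)
  simp only [sub_sub_cancel, sub_self, sub_zero] at hreflect
  rw [MeasureTheory.integral_indicator measurableSet_Iio, Measure.restrict_restrict measurableSet_Iio,
    Iio_inter_Ioi, ← integral_Ioc_eq_integral_Ioo, ← intervalIntegral.integral_of_le ht,
    ← hreflect, ← intervalIntegral.integral_const_mul]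
  congr 1 with u
  ring

theorem tendsto_integral_comp_sub_div {n f g : ℝ → ℝ} (hpos : ∀ τ, 0 < τ → 0 < n τ)
    (hmono : MonotoneOn n (Ioi 0))
    (hratio : ∀ u, 0 < u → Tendsto (fun t => n (t - u) / n t) atTop (𝓝 (g u)))
    (hf : IntegrableOn f (Ioi 0)) :
    Tendsto (fun t => (1 / n t) * ∫ τ in (0:ℝ)..t, n τ * f (t - τ)) atTop
      (𝓝 (∫ u in Ioi 0, g u * f u)) := by
  refine Tendsto.congr' (EventuallyEq.symm ?_) <|
    tendsto_integral_filter_of_dominated_convergence (fun u => ‖f u‖)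
      (F := fun t => (Iio t).indicator fun u => n (t - u) / n t * f u) ?_ ?_ hf.norm ?_
  · filter_upwards [eventually_ge_atTop 0] with t ht
    exact one_div_mul_integral_comp_sub n f ht
  · filter_upwards with t
    refine (aestronglyMeasurable_indicator_iff measurableSet_Iio).2 ?_
    rw [Measure.restrict_restrict measurableSet_Iio, Iio_inter_Ioi]
    have hanti : AntitoneOn (fun u => n (t - u)) (Ioo 0 t) := fun u hu v hv huv =>
      hmono (mem_Ioi.2 (by linarith [hv.2])) (mem_Ioi.2 (by linarith [hu.2])) (by linarith)
    exact ((aemeasurable_restrict_of_antitoneOn measurableSet_Ioo hanti).div_const _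
      |>.aestronglyMeasurable).mul (hf.mono_set Ioo_subset_Ioi_self).aestronglyMeasurable
  · filter_upwards [eventually_gt_atTop 0] with t ht
    filter_upwards [ae_restrict_mem measurableSet_Ioi] with u hu
    by_cases hut : u ∈ Iio t
    · have htu : 0 < t - u := sub_pos.2 hut
      have hratio_le : n (t - u) / n t ≤ 1 :=
        div_le_one_of_le₀ (hmono htu ht (by linarith [mem_Ioi.1 hu])) (hpos t ht).le
      have hratio_nonneg : 0 ≤ n (t - u) / n t := div_nonneg (hpos _ htu).le (hpos t ht).le
      rw [indicator_of_mem hut, norm_mul, Real.norm_of_nonneg hratio_nonneg]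
      exact mul_le_of_le_one_left (norm_nonneg _) hratio_le
    · rw [indicator_of_notMem hut, norm_zero]
      exact norm_nonneg _
  · filter_upwards [ae_restrict_mem measurableSet_Ioi] with u hu
    refine ((hratio u hu).mul_const (f u)).congr' ?_
    filter_upwards [eventually_gt_atTop u] with t ht
    rw [indicator_of_mem (mem_Iio.2 ht)]

theorem birthDeathPMF_succ {β u : ℝ} (hβ : β < 1) (hu : 0 < u) (m : ℕ) :
    birthDeathPMF β u (m + 1) = (1 - β) * exp (-(1 - β) * u) *
      ((1 - β) * ((1 - exp (-(1 - β) * u)) ^ m / (1 - β * exp (-(1 - β) * u)) ^ (m + 2))) := by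
  have hx1 : exp (-(1 - β) * u) < 1 := exp_lt_one_iff.2 (by nlinarith)
  have hx0 := exp_pos (-(1 - β) * u)
  unfold birthDeathPMF birthDeathS
  generalize exp (-(1 - β) * u) = x at hx0 hx1 ⊢
  have h1 : 1 - x ≠ 0 := by linarith
  have h2 : 1 - β * x ≠ 0 := by nlinarith
  rw [inv_div, div_pow]
  field_simp
  ring

theorem image_exp_neg_mul_Ioi {c : ℝ} (hc : 0 < c) :
    (fun u => exp (-c * u)) '' Ioi 0 = Ioo 0 1 := by
  ext x
  constructor
  · rintro ⟨u, hu, rfl⟩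
    exact ⟨exp_pos _, exp_lt_one_iff.2 (by nlinarith [mem_Ioi.1 hu])⟩
  · rintro ⟨hx0, hx1⟩
    refine ⟨-log x / c, div_pos (neg_pos.2 (log_neg hx0 hx1)) hc, ?_⟩
    simp only
    rw [show -c * (-log x / c) = log x by field_simp, exp_log hx0]

theorem hasDerivWithinAt_exp_neg_mul (c : ℝ) (s : Set ℝ) (u : ℝ) :
    HasDerivWithinAt (fun u => exp (-c * u)) (-c * exp (-c * u)) s u := by
  simpa [mul_comm] using ((hasDerivAt_id u).const_mul (-c)).exp.hasDerivWithinAt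

theorem integrableOn_Ioo_iff_comp_exp_neg_mul {c : ℝ} (hc : 0 < c) (g : ℝ → ℝ) :
    IntegrableOn g (Ioo 0 1) ↔
      IntegrableOn (fun u => c * exp (-c * u) * g (exp (-c * u))) (Ioi 0) := by
  rw [← image_exp_neg_mul_Ioi hc, integrableOn_image_iff_integrableOn_abs_deriv_smul
    measurableSet_Ioi (fun u _ => hasDerivWithinAt_exp_neg_mul c _ u)
    ((exp_injective.comp (mul_right_injective₀ (neg_ne_zero.2 hc.ne'))).injOn)]
  simp [abs_of_pos hc, mul_comm]

theorem integral_Ioo_eq_comp_exp_neg_mul {c : ℝ} (hc : 0 < c) (g : ℝ → ℝ) :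
    ∫ x in Ioo 0 1, g x = ∫ u in Ioi 0, c * exp (-c * u) * g (exp (-c * u)) := by
  rw [← image_exp_neg_mul_Ioi hc, integral_image_eq_integral_abs_deriv_smul
    measurableSet_Ioi (fun u _ => hasDerivWithinAt_exp_neg_mul c _ u)
    ((exp_injective.comp (mul_right_injective₀ (neg_ne_zero.2 hc.ne'))).injOn)]
  simp [abs_of_pos hc, mul_comm]

theorem one_sub_mul_pos {β x : ℝ} (hβ : β < 1) (hx0 : 0 ≤ x) (hx1 : x ≤ 1) : 0 < 1 - β * x := by
  rcases le_or_gt β 0 with h | h <;> nlinarith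

theorem integrableOn_birthDeathPMF {β : ℝ} (hβ : β < 1) (m : ℕ) :
    IntegrableOn (fun u => birthDeathPMF β u (m + 1)) (Ioi 0) := by
  have hkernel : IntegrableOn (fun x : ℝ => (1 - β) * ((1 - x) ^ m / (1 - β * x) ^ (m + 2)))
      (Ioo 0 1) := by
    refine (ContinuousOn.integrableOn_Icc ?_).mono_set Ioo_subset_Icc_self
    refine continuousOn_const.mul ((by fun_prop : Continuous fun x : ℝ => (1 - x) ^ m)
      |>.continuousOn.div (by fun_prop) fun x hx => pow_ne_zero _ ?_)
    exact (one_sub_mul_pos hβ hx.1 hx.2).ne'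
  refine ((integrableOn_Ioo_iff_comp_exp_neg_mul (sub_pos.2 hβ) _).1 hkernel).congr_fun
    (fun u hu => (birthDeathPMF_succ hβ hu m).symm) measurableSet_Ioi

theorem integral_exp_mul_birthDeathPMF {β : ℝ} (hβ : β < 1) (γ : ℝ) (m : ℕ) :
    ∫ u in Ioi 0, exp (-((1 - β) * γ) * u) * birthDeathPMF β u (m + 1)
      = (1 - β) * ∫ x in Ioo 0 1, x ^ γ * ((1 - x) ^ m / (1 - β * x) ^ (m + 2)) := by
  rw [← MeasureTheory.integral_const_mul, integral_Ioo_eq_comp_exp_neg_mul (sub_pos.2 hβ)]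
  refine setIntegral_congr_fun measurableSet_Ioi fun u hu => ?_
  rw [birthDeathPMF_succ hβ hu, ← exp_mul, show -(1 - β) * u * γ = -((1 - β) * γ) * u by ring]
  ring

theorem rpow_add_one_mul_integral_Ioo_zero_one (γ : ℝ) {c : ℝ} (hc : 0 < c) (h : ℝ → ℝ) :
    c ^ (γ + 1) * ∫ x in Ioo 0 1, x ^ γ * h x
      = ∫ s in Ioi 0, (Iio c).indicator (fun s => s ^ γ * h (s / c)) s := by
  have hscale : ∫ s in Ioo 0 c, (s / c) ^ γ * h (s / c) = c * ∫ x in Ioo 0 1, x ^ γ * h x := by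
    rw [← integral_Ioc_eq_integral_Ioo, ← integral_Ioc_eq_integral_Ioo,
      ← intervalIntegral.integral_of_le hc.le, ← intervalIntegral.integral_of_le zero_le_one,
      intervalIntegral.integral_comp_div (fun x => x ^ γ * h x) hc.ne', zero_div,
      div_self hc.ne', smul_eq_mul]
  rw [MeasureTheory.integral_indicator measurableSet_Iio, Measure.restrict_restrict measurableSet_Iio,
    Iio_inter_Ioi, rpow_add_one hc.ne', mul_assoc, ← hscale, ← MeasureTheory.integral_const_mul]
  refine setIntegral_congr_fun measurableSet_Ioo fun s hs => ?_
  rw [div_rpow hs.1.le hc.le]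
  field_simp [(rpow_pos_of_pos hc γ).ne']

theorem one_sub_le_exp_mul_one_sub_mul {β y : ℝ} (hβ0 : 0 ≤ β) (hβ1 : β ≤ 1)
    (hy : β * y ≤ 1) : 1 - y ≤ exp (-(1 - β) * y) * (1 - β * y) :=
  calc 1 - y ≤ (1 - (1 - β) * y) * (1 - β * y) := by
        nlinarith [mul_nonneg (mul_nonneg hβ0 (sub_nonneg.2 hβ1)) (sq_nonneg y)]
    _ ≤ exp (-(1 - β) * y) * (1 - β * y) :=
        mul_le_mul_of_nonneg_right (by linarith [add_one_le_exp (-(1 - β) * y)]) (by linarith)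

theorem one_sub_pow_div_le {β y : ℝ} (hβ0 : 0 ≤ β) (hβ1 : β < 1) (hy : y ≤ 1)
    (m : ℕ) : (1 - y) ^ m / (1 - β * y) ^ (m + 2) ≤ exp (-(1 - β) * m * y) / (1 - β) ^ 2 := by
  have hden : 1 - β ≤ 1 - β * y := by nlinarith
  have hratio : (1 - y) / (1 - β * y) ≤ exp (-(1 - β) * y) :=
    (div_le_iff₀ (by linarith)).2 (one_sub_le_exp_mul_one_sub_mul hβ0 hβ1.le (by nlinarith))
  calc (1 - y) ^ m / (1 - β * y) ^ (m + 2) = ((1 - y) / (1 - β * y)) ^ m / (1 - β * y) ^ 2 := by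
        rw [div_pow, pow_add, div_div]
    _ ≤ exp (-(1 - β) * y) ^ m / (1 - β) ^ 2 := by
        gcongr
        exact div_nonneg (by linarith) (by linarith)
    _ = exp (-(1 - β) * m * y) / (1 - β) ^ 2 := by
        rw [← exp_nat_mul]
        ring_nf

theorem one_sub_div_succ_pow_div_le {β s : ℝ} (hβ0 : 0 ≤ β) (hβ1 : β < 1) (hs : 0 ≤ s) {m : ℕ}
    (hm : 1 ≤ m) (hsm : s ≤ m + 1) :
    (1 - s / (m + 1)) ^ m / (1 - β * (s / (m + 1))) ^ (m + 2)
      ≤ exp (-((1 - β) / 2) * s) / (1 - β) ^ 2 := by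
  have hm : (1 : ℝ) ≤ m := by exact_mod_cast hm
  refine (one_sub_pow_div_le hβ0 hβ1 ((div_le_one (by positivity)).2 hsm) m).trans ?_
  refine div_le_div_of_nonneg_right (exp_le_exp.2 ?_) (by positivity)
  rw [show -(1 - β) * m * (s / (m + 1)) = -((1 - β) * s) * (m / (m + 1)) by ring]
  have : (1 : ℝ) / 2 ≤ m / (m + 1) := by rw [div_le_div_iff₀] <;> linarith
  nlinarith [mul_nonneg (sub_pos.2 hβ1).le hs]

theorem tendsto_one_add_div_succ_pow_add (c : ℝ) (p : ℕ) :
    Tendsto (fun m : ℕ => (1 + c / ((m : ℝ) + 1)) ^ (m + p)) atTop (𝓝 (exp c)) := by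
  have hdiv : Tendsto (fun m : ℕ => c / ((m : ℝ) + 1)) atTop (𝓝 0) :=
    tendsto_const_nhds.div_atTop (tendsto_natCast_atTop_atTop.atTop_add tendsto_const_nhds)
  have hpow : Tendsto (fun m : ℕ => (1 + c / ((m : ℝ) + 1)) ^ m) atTop (𝓝 (exp c)) := by
    refine tendsto_one_add_pow_exp_of_tendsto ?_
    have h := (tendsto_natCast_div_add_atTop (1 : ℝ)).const_mul c
    rw [mul_one] at h
    exact h.congr fun m => by ring
  simpa [pow_add] using hpow.mul (((tendsto_const_nhds (x := (1 : ℝ))).add hdiv).pow p)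

theorem tendsto_one_sub_div_succ_pow_div (β s : ℝ) :
    Tendsto (fun m : ℕ => (1 - s / ((m : ℝ) + 1)) ^ m / (1 - β * (s / ((m : ℝ) + 1))) ^ (m + 2))
      atTop (𝓝 (exp (-(1 - β) * s))) := by
  have hlim := (tendsto_one_add_div_succ_pow_add (-s) 0).div
    (tendsto_one_add_div_succ_pow_add (-(β * s)) 2) (exp_pos _).ne'
  rw [← exp_sub, show -s - -(β * s) = -(1 - β) * s by ring] at hlim
  refine hlim.congr fun m => ?_
  simp only [Pi.div_apply, add_zero]
  ring

theorem tendsto_rpow_mul_integral_kernel {β γ : ℝ} (hβ0 : 0 ≤ β) (hβ1 : β < 1) (hγ : -1 < γ) :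
    Tendsto (fun m : ℕ => ((m : ℝ) + 1) ^ (γ + 1) *
        ∫ x in Ioo 0 1, x ^ γ * ((1 - x) ^ m / (1 - β * x) ^ (m + 2)))
      atTop (𝓝 (Gamma (γ + 1) / (1 - β) ^ (γ + 1))) := by
  have hlam : 0 < 1 - β := sub_pos.2 hβ1
  have hGamma : ∫ s in Ioi 0, s ^ γ * exp (-(1 - β) * s) = Gamma (γ + 1) / (1 - β) ^ (γ + 1) := by
    have h := integral_rpow_mul_exp_neg_mul_Ioi (a := γ + 1) (by linarith) hlam
    rw [add_sub_cancel_right, one_div, inv_rpow hlam.le, inv_mul_eq_div] at h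
    simpa only [neg_mul] using h
  rw [← hGamma]
  refine Tendsto.congr (fun m => (rpow_add_one_mul_integral_Ioo_zero_one γ
    (by positivity : (0 : ℝ) < m + 1) _).symm) ?_
  refine tendsto_integral_filter_of_dominated_convergence
    (fun s => s ^ γ * exp (-((1 - β) / 2) * s) / (1 - β) ^ 2) ?_ ?_ ?_ ?_
  · exact Eventually.of_forall fun m =>
      ((Measurable.indicator (by fun_prop) measurableSet_Iio).aestronglyMeasurable)
  · filter_upwards [eventually_ge_atTop 1] with m hm
    filter_upwards [ae_restrict_mem measurableSet_Ioi] with s hs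
    have hs : 0 < s := hs
    by_cases hsm : s ∈ Iio ((m : ℝ) + 1)
    · have hy1 : s / (m + 1) ≤ 1 := (div_le_one (by positivity)).2 (le_of_lt hsm)
      have hK0 : 0 ≤ (1 - s / (m + 1)) ^ m / (1 - β * (s / (m + 1))) ^ (m + 2) :=
        div_nonneg (pow_nonneg (by linarith) _)
          (pow_nonneg (one_sub_mul_pos hβ1 (by positivity) hy1).le _)
      rw [indicator_of_mem hsm, norm_mul, norm_of_nonneg (rpow_nonneg hs.le _),
        norm_of_nonneg hK0, mul_div_assoc]
      exact mul_le_mul_of_nonneg_left (one_sub_div_succ_pow_div_le hβ0 hβ1 hs.le hm hsm.le)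
        (rpow_nonneg hs.le _)
    · rw [indicator_of_notMem hsm, norm_zero]
      positivity
  · exact IntegrableOn.congr_fun ((integrableOn_rpow_mul_exp_neg_mul_rpow hγ one_pos
      (half_pos hlam)).div_const ((1 - β) ^ 2)) (fun s _ => by simp only [rpow_one])
      measurableSet_Ioi
  · filter_upwards [ae_restrict_mem measurableSet_Ioi] with s hs
    refine ((tendsto_one_sub_div_succ_pow_div β s).const_mul (s ^ γ)).congr' ?_
    filter_upwards [(tendsto_natCast_atTop_atTop.atTop_add tendsto_const_nhds).eventually_gt_atTop s]
      with m hm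
    rw [indicator_of_mem (mem_Iio.2 hm)]

/-- Power-law tail of the large-time clone size distribution: if the limits
`L_k = lim_{t→∞} (1/n_t)∫_0^t n_τ P(Z_{t−τ}=k) dτ` exist, then
`lim_{k→∞} k^{γ*+1} L_k = Γ(1+γ*)/λ^{γ*}` with `λ = 1−β`, `γ* = δ*/λ`. -/
theorem clone_size_power_law_tail
    (β : ℝ) (hβ : β ∈ Set.Ico (0 : ℝ) 1) (lam : ℝ) (hlam : lam = 1 - β)
    (n : ℝ → ℝ) (hn : Assumption1 n) (δ : ℝ)
    (hδlim : Filter.Tendsto (fun t : ℝ => Real.log (n t) / t) Filter.atTop (nhds δ))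
    (γ : ℝ) (hγ : γ = δ / lam)
    (L : ℕ → ℝ)
    (hL : ∀ k : ℕ, 1 ≤ k →
      Filter.Tendsto
        (fun t : ℝ => (1 / n t) * ∫ τ in (0:ℝ)..t, n τ * birthDeathPMF β (t - τ) k)
        Filter.atTop (nhds (L k))) :
    Filter.Tendsto (fun k : ℕ => (k : ℝ) ^ (γ + 1) * L k) Filter.atTop
      (nhds (Real.Gamma (1 + γ) / lam ^ γ)) := by
  obtain ⟨hβ0, hβ1⟩ := hβ
  obtain ⟨-, -, -, hpos, hmono, hlim⟩ := hn
  subst hlam hγ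
  have hlam : 0 < 1 - β := sub_pos.2 hβ1
  have hγ : -1 < δ / (1 - β) := by
    linarith [div_nonneg (nonneg_of_tendsto_log_div hpos hmono hδlim) hlam.le]
  have hLsucc (m : ℕ) : L (m + 1) =
      (1 - β) * ∫ x in Ioo 0 1, x ^ (δ / (1 - β)) * ((1 - x) ^ m / (1 - β * x) ^ (m + 2)) := by
    refine tendsto_nhds_unique (hL (m + 1) (by omega)) ?_
    rw [← integral_exp_mul_birthDeathPMF hβ1, mul_div_cancel₀ _ hlam.ne']
    exact tendsto_integral_comp_sub_div hpos hmono
      (fun u hu => tendsto_div_comp_sub_of_tendsto_log_div hpos hlim hδlim hu.le)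
      (integrableOn_birthDeathPMF hβ1 m)
  rw [← tendsto_add_atTop_iff_nat 1]
  convert (tendsto_rpow_mul_integral_kernel hβ0 hβ1 hγ).const_mul (1 - β) using 1
  · ext m
    rw [hLsucc, Nat.cast_succ]
    ring
  · rw [rpow_add_one hlam.ne', add_comm]
    field_simp
end
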